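/- Let N ≥ 2, let A be a free basis of F_N, let T ∈ cv̄(F_N), let ε > 0, and let U_ε be a neighborhood of T in cv̄(F_N) such that for every w ∈ F_N and every T₁, T₂ ∈ U_ε one has | ||w||_{T₁} − ||w||_{T₂} | ≤ ε·||w||_A (such a neighborhood exists by the Uniform Scaling Approximation). Then for any T₁, T₂ ∈ U_ε and any current ν ∈ Curr(F_N) one has |⟨T₁, ν⟩ − ⟨T₂, ν⟩| ≤ 2ε·⟨T_A, ν⟩. -/

import Mathlib

/-!
Common definitions for formalizing results of Kapovich–Lustig,
"Geometric Intersection Number and analogues of the Curve Complex for free groups".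
-/

open Filter Topology
open scoped NNReal

namespace KL

/-- The free group `F_N` of finite rank `N`. -/
abbrev FN (N : ℕ) := FreeGroup (Fin N)

/-- `b : Fin N → F_N` is a free basis of `F_N` if the endomorphism it induces is bijective. -/
def IsBasis {N : ℕ} (b : Fin N → FN N) : Prop :=
  Function.Bijective (FreeGroup.lift b)

/-- An element of `F_N` is primitive if it is a member of some free basis. -/
def IsPrimitive {N : ℕ} (a : FN N) : Prop :=
  ∃ b : Fin N → FN N, IsBasis b ∧ ∃ i, b i = a

/-- A subgroup of `F_N` is a free factor if it is generated by a part of some free basis. -/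
def IsFreeFactor {N : ℕ} (A : Subgroup (FN N)) : Prop :=
  ∃ (b : Fin N → FN N) (s : Set (Fin N)), IsBasis b ∧ A = Subgroup.closure (b '' s)

/-- A proper nontrivial free factor of `F_N`. -/
def IsProperFreeFactor {N : ℕ} (A : Subgroup (FN N)) : Prop :=
  IsFreeFactor A ∧ A ≠ ⊥ ∧ A ≠ ⊤

/-- An (internal) free product decomposition `F_N = A ∗ B`. -/
def IsFreeProductDecomp {N : ℕ} (A B : Subgroup (FN N)) : Prop :=
  ∃ (b : Fin N → FN N) (s : Set (Fin N)), IsBasis b ∧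
    A = Subgroup.closure (b '' s) ∧ B = Subgroup.closure (b '' sᶜ)

/-- The conjugate subgroup `g A g⁻¹`. -/
def conjSub {N : ℕ} (g : FN N) (A : Subgroup (FN N)) : Subgroup (FN N) :=
  Subgroup.map (MulAut.conj g).toMonoidHom A

/-- Two subgroups of `F_N` are conjugate. -/
def SubConj {N : ℕ} (A B : Subgroup (FN N)) : Prop :=
  ∃ g : FN N, B = conjSub g A

lemma conjSub_one {N : ℕ} (A : Subgroup (FN N)) : conjSub (1 : FN N) A = A := by
  have h : (MulAut.conj (1 : FN N)).toMonoidHom = MonoidHom.id (FN N) := by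
    ext x; simp [MulAut.conj_apply]
  rw [conjSub, h, Subgroup.map_id]

lemma conjSub_conjSub {N : ℕ} (g h : FN N) (A : Subgroup (FN N)) :
    conjSub g (conjSub h A) = conjSub (g * h) A := by
  rw [conjSub, conjSub, conjSub, Subgroup.map_map]
  congr 1
  ext x
  simp [MulAut.conj_apply, mul_assoc]

lemma subConj_refl {N : ℕ} (A : Subgroup (FN N)) : SubConj A A :=
  ⟨1, (conjSub_one A).symm⟩

lemma subConj_symm {N : ℕ} {A B : Subgroup (FN N)} (h : SubConj A B) : SubConj B A := by
  obtain ⟨g, rfl⟩ := h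
  exact ⟨g⁻¹, by rw [conjSub_conjSub, inv_mul_cancel, conjSub_one]⟩

lemma subConj_trans {N : ℕ} {A B C : Subgroup (FN N)} (h1 : SubConj A B) (h2 : SubConj B C) :
    SubConj A C := by
  obtain ⟨g, rfl⟩ := h1
  obtain ⟨h, rfl⟩ := h2
  exact ⟨h * g, conjSub_conjSub h g A⟩

/-- A one-edge (non-loop) free splitting of `F_N`: a nontrivial free product
decomposition `F_N = A ∗ B`. -/
structure Splitting (N : ℕ) where
  A : Subgroup (FN N)
  B : Subgroup (FN N)
  hA : A ≠ ⊥
  hB : B ≠ ⊥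
  decomp : IsFreeProductDecomp A B

/-- Two splittings have `F_N`-equivariantly isometric Bass–Serre trees iff the
(unordered) pairs of vertex groups agree up to conjugation. -/
def Splitting.Equiv {N : ℕ} (s t : Splitting N) : Prop :=
  (SubConj s.A t.A ∧ SubConj s.B t.B) ∨ (SubConj s.A t.B ∧ SubConj s.B t.A)

def splittingSetoid (N : ℕ) : Setoid (Splitting N) where
  r := Splitting.Equiv
  iseqv := by
    refine ⟨fun s => Or.inl ⟨subConj_refl _, subConj_refl _⟩, ?_, ?_⟩
    · rintro s t (⟨h1, h2⟩ | ⟨h1, h2⟩)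
      · exact Or.inl ⟨subConj_symm h1, subConj_symm h2⟩
      · exact Or.inr ⟨subConj_symm h2, subConj_symm h1⟩
    · rintro s t u (⟨h1, h2⟩ | ⟨h1, h2⟩) (⟨h3, h4⟩ | ⟨h3, h4⟩)
      · exact Or.inl ⟨subConj_trans h1 h3, subConj_trans h2 h4⟩
      · exact Or.inr ⟨subConj_trans h1 h3, subConj_trans h2 h4⟩
      · exact Or.inr ⟨subConj_trans h1 h4, subConj_trans h2 h3⟩
      · exact Or.inl ⟨subConj_trans h1 h4, subConj_trans h2 h3⟩

/-- Vertices of the free splitting graph: one-edge non-loop free splittings up to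
equivariant isometry of Bass–Serre trees. -/
def SplitVertex (N : ℕ) := Quotient (splittingSetoid N)

/-- `g` is elliptic in the splitting `F_N = A ∗ B` iff it is conjugate into `A` or `B`;
equivalently its translation length on the Bass–Serre tree is `0`. -/
def Splitting.Elliptic {N : ℕ} (s : Splitting N) (g : FN N) : Prop :=
  ∃ h : FN N, h * g * h⁻¹ ∈ s.A ∨ h * g * h⁻¹ ∈ s.B

def VElliptic {N : ℕ} (x : SplitVertex N) (g : FN N) : Prop :=
  ∃ s : Splitting N, Quotient.mk'' s = x ∧ s.Elliptic g

/-- An ordered pair of one-edge splittings admitting a common two-edge refinement: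
`F_N = C₁ ∗ C₂ ∗ C₃`, the first splitting being `(C₁ ∗ C₂) ∗ C₃` and the second
`C₁ ∗ (C₂ ∗ C₃)`. -/
def RefinedPair {N : ℕ} (x y : SplitVertex N) : Prop :=
  ∃ (b : Fin N → FN N) (s₁ s₂ s₃ : Set (Fin N)) (u v : Splitting N),
    IsBasis b ∧ s₁ ∪ s₂ ∪ s₃ = Set.univ ∧
    Disjoint s₁ s₂ ∧ Disjoint s₁ s₃ ∧ Disjoint s₂ s₃ ∧
    u.A = Subgroup.closure (b '' (s₁ ∪ s₂)) ∧ u.B = Subgroup.closure (b '' s₃) ∧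
    v.A = Subgroup.closure (b '' s₁) ∧ v.B = Subgroup.closure (b '' (s₂ ∪ s₃)) ∧
    Quotient.mk'' u = x ∧ Quotient.mk'' v = y

/-- The free splitting graph `F(F_N)`. -/
def freeSplittingGraph (N : ℕ) : SimpleGraph (SplitVertex N) where
  Adj x y := x ≠ y ∧ (RefinedPair x y ∨ RefinedPair y x)
  symm := by constructor; rintro x y ⟨h1, h2⟩; exact ⟨h1.symm, h2.symm⟩
  loopless := ⟨fun x h => h.1 rfl⟩

/-- The dual free splitting graph `F*(F_N)`: same vertices as `F(F_N)`; two
distinct vertices are adjacent iff some nontrivial element of `F_N` is elliptic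
in both splittings. -/
def dualFreeSplittingGraph (N : ℕ) : SimpleGraph (SplitVertex N) where
  Adj x y := x ≠ y ∧ ∃ g : FN N, g ≠ 1 ∧ VElliptic x g ∧ VElliptic y g
  symm := by constructor; rintro x y ⟨h1, g, hg, hx, hy⟩; exact ⟨h1.symm, g, hg, hy, hx⟩
  loopless := ⟨fun x h => h.1 rfl⟩

/-- A one-loop-edge free splitting of `F_N` (an HNN extension over the trivial
group): the vertex group is a corank-one free factor. -/
structure LoopSplitting (N : ℕ) where
  A : Subgroup (FN N)
  corank_one : ∃ (b : Fin N → FN N) (i : Fin N), IsBasis b ∧ A = Subgroup.closure (b '' {i}ᶜ)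

def loopSetoid (N : ℕ) : Setoid (LoopSplitting N) where
  r s t := SubConj s.A t.A
  iseqv := ⟨fun _ => subConj_refl _, fun h => subConj_symm h, fun h1 h2 => subConj_trans h1 h2⟩

def LoopVertex (N : ℕ) := Quotient (loopSetoid N)

/-- Vertices of the cut graph `S(F_N)`: one-edge free splittings, possibly with a
loop edge. -/
def CutVertex (N : ℕ) := SplitVertex N ⊕ LoopVertex N

def LoopSplitting.Elliptic {N : ℕ} (s : LoopSplitting N) (g : FN N) : Prop :=
  ∃ h : FN N, h * g * h⁻¹ ∈ s.A

def LVElliptic {N : ℕ} (y : LoopVertex N) (g : FN N) : Prop :=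
  ∃ s : LoopSplitting N, Quotient.mk'' s = y ∧ s.Elliptic g

def CutVertex.Elliptic {N : ℕ} : CutVertex N → FN N → Prop
  | Sum.inl x, g => VElliptic x g
  | Sum.inr y, g => LVElliptic y g

/-- Refinement shape: a two-edge graph of groups which is a path (two non-loop edges). -/
def CutRefPath {N : ℕ} (x y : CutVertex N) : Prop :=
  ∃ x' y' : SplitVertex N, x = Sum.inl x' ∧ y = Sum.inl y' ∧
    (RefinedPair x' y' ∨ RefinedPair y' x')

/-- Refinement shape: a two-edge graph of groups with one non-loop edge and one loop
edge, `F_N = C₁ ∗ C₂ ∗ ⟨b i⟩`; collapsing the loop gives the non-loop splitting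
`(C₁ ∗ ⟨b i⟩) ∗ C₂` and collapsing the non-loop edge gives the loop splitting with
vertex group `C₁ ∗ C₂`. -/
def CutRefLoopEdge {N : ℕ} (x y : CutVertex N) : Prop :=
  ∃ (b : Fin N → FN N) (s₁ s₂ : Set (Fin N)) (i : Fin N) (u : Splitting N)
    (v : LoopSplitting N),
    IsBasis b ∧ s₁ ∪ s₂ ∪ {i} = Set.univ ∧ Disjoint s₁ s₂ ∧ i ∉ s₁ ∧ i ∉ s₂ ∧
    u.A = Subgroup.closure (b '' (s₁ ∪ {i})) ∧ u.B = Subgroup.closure (b '' s₂) ∧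
    v.A = Subgroup.closure (b '' (s₁ ∪ s₂)) ∧
    x = Sum.inl (Quotient.mk'' u) ∧ y = Sum.inr (Quotient.mk'' v)

/-- Refinement shape: a two-edge graph of groups with two loop edges,
`F_N = C ∗ ⟨b i⟩ ∗ ⟨b j⟩`; collapsing one loop gives the loop splitting with vertex
group `C ∗ ⟨b j⟩`, collapsing the other gives the one with vertex group `C ∗ ⟨b i⟩`. -/
def CutRefTwoLoops {N : ℕ} (x y : CutVertex N) : Prop :=
  ∃ (b : Fin N → FN N) (s : Set (Fin N)) (i j : Fin N) (v w : LoopSplitting N),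
    IsBasis b ∧ i ≠ j ∧ i ∉ s ∧ j ∉ s ∧ s ∪ {i, j} = Set.univ ∧
    v.A = Subgroup.closure (b '' (s ∪ {j})) ∧ w.A = Subgroup.closure (b '' (s ∪ {i})) ∧
    x = Sum.inr (Quotient.mk'' v) ∧ y = Sum.inr (Quotient.mk'' w)

/-- The cut graph `S(F_N)`: vertices are one-edge free splittings of `F_N` over the
trivial group (possibly with a loop edge); two distinct vertices are adjacent iff
they are the two one-edge collapses of a common two-edge free splitting. -/
def cutGraph (N : ℕ) : SimpleGraph (CutVertex N) where
  Adj x y := x ≠ y ∧ (CutRefPath x y ∨ CutRefLoopEdge x y ∨ CutRefLoopEdge y x ∨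
    CutRefTwoLoops x y ∨ CutRefTwoLoops y x)
  symm := by
    constructor
    rintro x y ⟨h1, h2⟩
    refine ⟨h1.symm, ?_⟩
    rcases h2 with (⟨x', y', hx, hy, hr⟩ | h | h | ⟨b, s, i, j, v, w, hb, hij, hi, hj, hu, hv, hw, hx, hy⟩ | ⟨b, s, i, j, v, w, hb, hij, hi, hj, hu, hv, hw, hx, hy⟩)
    · exact Or.inl ⟨y', x', hy, hx, hr.symm⟩
    · exact Or.inr (Or.inr (Or.inl h))
    · exact Or.inr (Or.inl h)
    · exact Or.inr <| Or.inr <| Or.inr <| Or.inr ⟨b, s, i, j, v, w, hb, hij, hi, hj, hu, hv, hw, hx, hy⟩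
    · exact Or.inr <| Or.inr <| Or.inr <| Or.inl ⟨b, s, i, j, v, w, hb, hij, hi, hj, hu, hv, hw, hx, hy⟩
  loopless := ⟨fun x h => h.1 rfl⟩

/-- The dual cut graph `S*(F_N)`: same vertices as `S(F_N)`; two distinct vertices are
adjacent iff the corresponding splittings have a common nontrivial elliptic element. -/
def dualCutGraph (N : ℕ) : SimpleGraph (CutVertex N) where
  Adj x y := x ≠ y ∧ ∃ g : FN N, g ≠ 1 ∧ CutVertex.Elliptic x g ∧ CutVertex.Elliptic y g
  symm := by constructor; rintro x y ⟨h1, g, hg, hx, hy⟩; exact ⟨h1.symm, g, hg, hy, hx⟩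
  loopless := ⟨fun x h => h.1 rfl⟩

/-- Nontrivial conjugacy classes of elements of `F_N`. -/
def NontrivConj (N : ℕ) := {c : ConjClasses (FN N) // c ≠ 1}

/-- Vertices of the ellipticity graph `Z(F_N)`. -/
def ZVertex (N : ℕ) := CutVertex N ⊕ NontrivConj N

/-- The ellipticity graph `Z(F_N)`: a bipartite graph on one-edge free splittings and
nontrivial conjugacy classes, where `[a]` is adjacent to a splitting `T` iff `a` is
elliptic in `T` (i.e. `‖a‖_T = 0`). -/
def ellipticityGraph (N : ℕ) : SimpleGraph (ZVertex N) where
  Adj x y :=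
    (∃ T c, x = Sum.inl T ∧ y = Sum.inr c ∧
      ∃ a : FN N, ConjClasses.mk a = c.1 ∧ CutVertex.Elliptic T a) ∨
    (∃ T c, x = Sum.inr c ∧ y = Sum.inl T ∧
      ∃ a : FN N, ConjClasses.mk a = c.1 ∧ CutVertex.Elliptic T a)
  symm := by
    constructor
    rintro x y (⟨T, c, hx, hy, h⟩ | ⟨T, c, hx, hy, h⟩)
    · exact Or.inr ⟨T, c, hy, hx, h⟩
    · exact Or.inl ⟨T, c, hy, hx, h⟩
  loopless := by
    constructor
    rintro x (⟨T, c, rfl, hy, -⟩ | ⟨T, c, rfl, hy, -⟩) <;> simp_all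

/-- Proper nontrivial free factors of `F_N`. -/
def ProperFactor (N : ℕ) := {A : Subgroup (FN N) // IsProperFreeFactor A}

def factorSetoid (N : ℕ) : Setoid (ProperFactor N) where
  r A B := SubConj A.1 B.1
  iseqv := ⟨fun _ => subConj_refl _, fun h => subConj_symm h, fun h1 h2 => subConj_trans h1 h2⟩

/-- Vertices of the free factor graph: conjugacy classes of proper nontrivial
free factors of `F_N`. -/
def FactorVertex (N : ℕ) := Quotient (factorSetoid N)

/-- The free factor graph `J(F_N)`: distinct conjugacy classes `[A]`, `[B]` are adjacent
iff `F_N = A ∗ B ∗ C` for some representatives and some (possibly trivial) `C`. -/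
def freeFactorGraph (N : ℕ) : SimpleGraph (FactorVertex N) where
  Adj x y := x ≠ y ∧ ∃ (b : Fin N → FN N) (s₁ s₂ s₃ : Set (Fin N)) (A B : ProperFactor N),
    IsBasis b ∧ s₁ ∪ s₂ ∪ s₃ = Set.univ ∧
    Disjoint s₁ s₂ ∧ Disjoint s₁ s₃ ∧ Disjoint s₂ s₃ ∧
    A.1 = Subgroup.closure (b '' s₁) ∧ B.1 = Subgroup.closure (b '' s₂) ∧
    ((Quotient.mk'' A = x ∧ Quotient.mk'' B = y) ∨ (Quotient.mk'' A = y ∧ Quotient.mk'' B = x))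
  symm := by
    constructor
    rintro x y ⟨h1, b, s₁, s₂, s₃, A, B, hb, hu, d12, d13, d23, hA, hB, h | h⟩
    · exact ⟨h1.symm, b, s₁, s₂, s₃, A, B, hb, hu, d12, d13, d23, hA, hB, Or.inr ⟨h.1, h.2⟩⟩
    · exact ⟨h1.symm, b, s₁, s₂, s₃, A, B, hb, hu, d12, d13, d23, hA, hB, Or.inl ⟨h.1, h.2⟩⟩
  loopless := ⟨fun x h => h.1 rfl⟩

/-- The dominance graph `D(F_N)`: distinct conjugacy classes of proper free factors are
adjacent iff some representatives are nested. -/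
def dominanceGraph (N : ℕ) : SimpleGraph (FactorVertex N) where
  Adj x y := x ≠ y ∧ ∃ A B : ProperFactor N,
    ((Quotient.mk'' A = x ∧ Quotient.mk'' B = y) ∨ (Quotient.mk'' A = y ∧ Quotient.mk'' B = x)) ∧
    (A.1 ≤ B.1 ∨ B.1 ≤ A.1)
  symm := by
    constructor
    rintro x y ⟨h1, A, B, h | h, hle⟩
    · exact ⟨h1.symm, A, B, Or.inr h, hle⟩
    · exact ⟨h1.symm, A, B, Or.inl h, hle⟩
  loopless := ⟨fun x h => h.1 rfl⟩

/-- Vertices of the primitivity graph: conjugacy classes of primitive elements. -/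
def PrimVertex (N : ℕ) := {c : ConjClasses (FN N) // ∃ a, ConjClasses.mk a = c ∧ IsPrimitive a}

/-- The primitivity graph `P(F_N)`: two distinct conjugacy classes of primitive elements
are adjacent iff they have representatives belonging to a common free basis. -/
def primitivityGraph (N : ℕ) : SimpleGraph (PrimVertex N) where
  Adj x y := x ≠ y ∧ ∃ (b : Fin N → FN N) (i j : Fin N), IsBasis b ∧
    ConjClasses.mk (b i) = x.1 ∧ ConjClasses.mk (b j) = y.1
  symm := by constructor; rintro x y ⟨h1, b, i, j, hb, hi, hj⟩; exact ⟨h1.symm, b, j, i, hb, hj, hi⟩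
  loopless := ⟨fun x h => h.1 rfl⟩

/-- Quasi-isometry between two graphs (with respect to the path metrics). -/
def QuasiIsometric {V W : Type*} (G : SimpleGraph V) (H : SimpleGraph W) : Prop :=
  ∃ (f : V → W) (lam C : ℝ), 1 ≤ lam ∧ 0 ≤ C ∧
    (∀ x y : V, lam⁻¹ * (G.dist x y : ℝ) - C ≤ (H.dist (f x) (f y) : ℝ) ∧
      (H.dist (f x) (f y) : ℝ) ≤ lam * (G.dist x y : ℝ) + C) ∧
    (∀ w : W, ∃ x : V, (H.dist w (f x) : ℝ) ≤ C)

/-- The subgroup of inner automorphisms of `F_N`. -/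
def Inn (N : ℕ) : Subgroup (MulAut (FN N)) := (MulAut.conj (G := FN N)).range

instance innNormal (N : ℕ) : (Inn N).Normal := by
  constructor
  rintro x ⟨g, rfl⟩ φ
  refine ⟨φ g, ?_⟩
  ext h
  simp [MulAut.conj_apply, MulAut.mul_apply, map_mul, map_inv, mul_assoc]

/-- The outer automorphism group `Out(F_N)`. -/
def Out (N : ℕ) := MulAut (FN N) ⧸ Inn N

instance (N : ℕ) : Group (Out N) := QuotientGroup.Quotient.group (Inn N)

/-- The subgroup `A.map φ` (image of a subgroup under an automorphism). -/
def mapAut {N : ℕ} (φ : MulAut (FN N)) (A : Subgroup (FN N)) : Subgroup (FN N) :=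
  A.map φ.toMonoidHom

/-- An outer automorphism is irreducible with irreducible powers (iwip) if no positive
power of it maps a proper nontrivial free factor of `F_N` to a conjugate of itself. -/
def IsIwip {N : ℕ} (Φ : Out N) : Prop :=
  ∀ φ : MulAut (FN N), QuotientGroup.mk φ = Φ →
    ∀ k : ℕ, 1 ≤ k → ∀ A : Subgroup (FN N), IsProperFreeFactor A →
      ¬ SubConj (mapAut (φ ^ k) A) A

/-- An outer automorphism is atoroidal (has no periodic conjugacy classes) if no positive
power of it fixes the conjugacy class of a nontrivial element of `F_N`. -/
def IsAtoroidal {N : ℕ} (Φ : Out N) : Prop :=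
  ∀ φ : MulAut (FN N), QuotientGroup.mk φ = Φ →
    ∀ k : ℕ, 1 ≤ k → ∀ g : FN N, g ≠ 1 → ¬ IsConj ((φ ^ k) g) g

/-- A group is virtually cyclic if it has a cyclic subgroup of finite index. -/
def IsVirtuallyCyclic (G : Type*) [Group G] : Prop :=
  ∃ H : Subgroup G, (∃ g, H = Subgroup.zpowers g) ∧ H.FiniteIndex

lemma IsBasis.comp {N : ℕ} {b : Fin N → FN N} (hb : IsBasis b) (φ : MulAut (FN N)) :
    IsBasis (fun i => φ (b i)) := by
  have h : (FreeGroup.lift (fun i => φ (b i)) : FN N →* FN N) =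
      (φ.toMonoidHom.comp (FreeGroup.lift b)) := by
    apply FreeGroup.ext_hom
    intro a
    simp
  unfold IsBasis
  rw [h]
  have h2 : ⇑(φ.toMonoidHom.comp (FreeGroup.lift b)) = ⇑φ ∘ ⇑(FreeGroup.lift b) := rfl
  rw [h2]
  exact Function.Bijective.comp φ.bijective hb

lemma mapAut_ne_bot {N : ℕ} (φ : MulAut (FN N)) {A : Subgroup (FN N)} (h : A ≠ ⊥) :
    mapAut φ A ≠ ⊥ := by
  intro h0
  apply h
  apply Subgroup.map_injective (f := φ.toMonoidHom) φ.injective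
  rw [← mapAut, h0, Subgroup.map_bot]

lemma mapAut_closure {N : ℕ} (φ : MulAut (FN N)) (b : Fin N → FN N) (s : Set (Fin N)) :
    mapAut φ (Subgroup.closure (b '' s)) = Subgroup.closure ((fun i => φ (b i)) '' s) := by
  rw [mapAut, MonoidHom.map_closure, ← Set.image_comp]
  rfl

/-- The image of a splitting under an automorphism of `F_N`. -/
def autSplit {N : ℕ} (φ : MulAut (FN N)) (s : Splitting N) : Splitting N where
  A := mapAut φ s.A
  B := mapAut φ s.B
  hA := mapAut_ne_bot φ s.hA
  hB := mapAut_ne_bot φ s.hB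
  decomp := by
    obtain ⟨b, S, hb, hA, hB⟩ := s.decomp
    exact ⟨fun i => φ (b i), S, hb.comp φ,
      by rw [hA, mapAut_closure], by rw [hB, mapAut_closure]⟩

lemma mapAut_conjSub {N : ℕ} (φ : MulAut (FN N)) (g : FN N) (A : Subgroup (FN N)) :
    mapAut φ (conjSub g A) = conjSub (φ g) (mapAut φ A) := by
  rw [mapAut, mapAut, conjSub, conjSub, Subgroup.map_map, Subgroup.map_map]
  congr 1
  ext x
  simp [MulAut.conj_apply, map_mul, map_inv]

lemma SubConj.mapAut {N : ℕ} (φ : MulAut (FN N)) {A B : Subgroup (FN N)} (h : SubConj A B) :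
    SubConj (mapAut φ A) (mapAut φ B) := by
  obtain ⟨g, rfl⟩ := h
  exact ⟨φ g, mapAut_conjSub φ g A⟩

lemma autSplit_equiv {N : ℕ} (φ : MulAut (FN N)) {s t : Splitting N} (h : s.Equiv t) :
    (autSplit φ s).Equiv (autSplit φ t) := by
  rcases h with ⟨h1, h2⟩ | ⟨h1, h2⟩
  · exact Or.inl ⟨h1.mapAut φ, h2.mapAut φ⟩
  · exact Or.inr ⟨h1.mapAut φ, h2.mapAut φ⟩

lemma mapAut_mul {N : ℕ} (φ ψ : MulAut (FN N)) (A : Subgroup (FN N)) :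
    mapAut (φ * ψ) A = mapAut φ (mapAut ψ A) := by
  rw [mapAut, mapAut, mapAut, Subgroup.map_map]
  rfl

lemma mapAut_conj {N : ℕ} (g : FN N) (A : Subgroup (FN N)) :
    mapAut (MulAut.conj g) A = conjSub g A := rfl

/-- The induced action on vertices of the splitting graphs. -/
def autSplitV {N : ℕ} (φ : MulAut (FN N)) : SplitVertex N → SplitVertex N :=
  Quotient.map' (autSplit φ) (fun _ _ h => autSplit_equiv φ h)

lemma autSplit_inn_equiv {N : ℕ} (g : FN N) (s : Splitting N) :
    (autSplit (MulAut.conj g) s).Equiv s :=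
  Or.inl ⟨subConj_symm ⟨g, rfl⟩, subConj_symm ⟨g, rfl⟩⟩

/-- The action of `Out(F_N)` on vertices of the free splitting graph
(and of the dual free splitting graph). -/
def outSplit {N : ℕ} (Φ : Out N) : SplitVertex N → SplitVertex N :=
  Quotient.liftOn' Φ (fun φ => autSplitV φ) (by
    intro φ ψ h
    rw [QuotientGroup.leftRel_apply] at h
    obtain ⟨g, hg⟩ := h
    have hψ : ψ = φ * MulAut.conj g := by rw [hg, mul_inv_cancel_left]
    funext x
    refine Quotient.inductionOn' x (fun s => ?_)
    show Quotient.mk'' (autSplit φ s) = Quotient.mk'' (autSplit ψ s)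
    apply Quotient.sound'
    have : autSplit ψ s = autSplit φ (autSplit (MulAut.conj g) s) := by
      have hAB : ∀ A : Subgroup (FN N), mapAut ψ A = mapAut φ (mapAut (MulAut.conj g) A) := by
        intro A
        rw [hψ, mapAut_mul]
      cases s
      simp only [autSplit, hAB]
    rw [this]
    exact Setoid.symm' _ (autSplit_equiv φ (autSplit_inn_equiv g s)))

/-- Abstract data recording the closure `cv̄(F_N)` of unprojectivized Outer space,
the space `Curr(F_N)` of geodesic currents, and the structure on them described in
Sections 2–5 of [Kapovich–Lustig]: translation length functions, scaling, the
Cayley trees and Bass–Serre trees, counting currents, and the `Aut(F_N)`-actions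
inducing the `Out(F_N)`-actions. -/
structure KLData (N : ℕ) where
  /-- the closure of unprojectivized Outer space: minimal nontrivial very small
  isometric actions of `F_N` on `ℝ`-trees up to equivariant isometry -/
  cvbar : Type
  /-- the equivariant Gromov–Hausdorff topology on `cv̄(F_N)` -/
  [top_cvbar : TopologicalSpace cvbar]
  /-- translation length functions: `len T g = ‖g‖_T` -/
  len : cvbar → FN N → ℝ
  len_nonneg : ∀ T g, 0 ≤ len T g
  /-- translation length is a conjugacy invariant -/
  len_conj : ∀ T g h, len T (h * g * h⁻¹) = len T g
  /-- points of `cv̄(F_N)` are determined by their translation length functions -/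
  len_inj : Function.Injective len
  /-- convergence in `cv̄(F_N)` implies pointwise convergence of length functions -/
  len_cont : ∀ g, Continuous fun T => len T g
  /-- rescaling the metric of a tree by a factor `c` -/
  smul : ℝ≥0 → cvbar → cvbar
  smul_one : ∀ T, smul 1 T = T
  smul_mul : ∀ c d T, smul (c * d) T = smul c (smul d T)
  len_smul : ∀ c T g, len (smul c T) g = (c : ℝ) * len T g
  /-- unprojectivized Outer space `cv(F_N)`: minimal free and discrete actions -/
  cv : Set cvbar
  /-- `cv̄(F_N)` is the closure of `cv(F_N)` -/
  cv_dense : Dense cv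
  /-- the Cayley tree `T_A` of a free basis `A`, with edges of length `1`;
  its length function is the cyclically reduced length `‖·‖_A` -/
  cayley : ∀ (b : Fin N → FN N), IsBasis b → cvbar
  cayley_mem_cv : ∀ b hb, cayley b hb ∈ cv
  /-- the Bass–Serre tree of a one-edge free splitting of `F_N` -/
  bs : Splitting N → cvbar
  /-- an element has translation length `0` on a Bass–Serre tree iff it is elliptic -/
  bs_len_eq_zero_iff : ∀ s g, len (bs s) g = 0 ↔ Splitting.Elliptic s g
  /-- equivalent splittings have equal (equivariantly isometric) Bass–Serre trees -/
  bs_eq : ∀ s t, Splitting.Equiv s t → bs s = bs t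
  /-- the space of geodesic currents: `F_N`-invariant flip-invariant positive Radon
  measures on `∂²F_N`, a cone with its natural addition and rescaling -/
  Curr : Type
  [currAddCommMonoid : AddCommMonoid Curr]
  [currModule : Module ℝ≥0 Curr]
  /-- the weak-* topology on `Curr(F_N)` -/
  [top_Curr : TopologicalSpace Curr]
  /-- the counting current `η_g` of a nontrivial element `g` -/
  eta : FN N → Curr
  eta_ne_zero : ∀ g, g ≠ 1 → eta g ≠ 0
  eta_conj : ∀ g h, eta (h * g * h⁻¹) = eta g
  /-- rational currents (nonnegative multiples of counting currents) are dense -/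
  rational_dense : Dense {μ : Curr | ∃ (c : ℝ≥0) (g : FN N), g ≠ 1 ∧ μ = c • eta g}
  /-- the double boundary `∂²F_N` -/
  bdry2 : Type
  /-- the support of a current, as a measure on `∂²F_N` -/
  supp : Curr → Set bdry2
  /-- the action of `Aut(F_N)` on `cv̄(F_N)` (written as a left action, `φT = Tφ⁻¹`) -/
  autT : MulAut (FN N) → cvbar → cvbar
  autT_one : ∀ T, autT 1 T = T
  autT_mul : ∀ φ ψ T, autT (φ * ψ) T = autT φ (autT ψ T)
  /-- inner automorphisms act trivially, so the action descends to `Out(F_N)` -/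
  autT_inn : ∀ g T, autT (MulAut.conj g) T = T
  autT_smul : ∀ φ c T, autT φ (smul c T) = smul c (autT φ T)
  len_autT : ∀ φ T g, len (autT φ T) g = len T (φ⁻¹ g)
  /-- the action of `Aut(F_N)` on `Curr(F_N)` -/
  autC : MulAut (FN N) → Curr → Curr
  autC_one : ∀ μ, autC 1 μ = μ
  autC_mul : ∀ φ ψ μ, autC (φ * ψ) μ = autC φ (autC ψ μ)
  /-- inner automorphisms act trivially, so the action descends to `Out(F_N)` -/
  autC_inn : ∀ g μ, autC (MulAut.conj g) μ = μ
  autC_zero : ∀ φ, autC φ 0 = 0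
  autC_smul : ∀ φ (c : ℝ≥0) μ, autC φ (c • μ) = c • autC φ μ
  autC_eta : ∀ φ g, autC φ (eta g) = eta (φ g)

attribute [instance] KLData.top_cvbar KLData.currAddCommMonoid KLData.currModule
  KLData.top_Curr

namespace KLData

variable {N : ℕ}

/-- The action of `Out(F_N)` on `cv̄(F_N)`. -/
def outT (D : KLData N) (Φ : Out N) (T : D.cvbar) : D.cvbar :=
  Quotient.liftOn' Φ (fun φ => D.autT φ T) (by
    intro φ ψ h
    rw [QuotientGroup.leftRel_apply] at h
    obtain ⟨g, hg⟩ := h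
    have hψ : ψ = φ * MulAut.conj g := by rw [hg, mul_inv_cancel_left]
    show D.autT φ T = D.autT ψ T
    rw [hψ, D.autT_mul, D.autT_inn])

/-- The action of `Out(F_N)` on `Curr(F_N)`. -/
def outC (D : KLData N) (Φ : Out N) (μ : D.Curr) : D.Curr :=
  Quotient.liftOn' Φ (fun φ => D.autC φ μ) (by
    intro φ ψ h
    rw [QuotientGroup.leftRel_apply] at h
    obtain ⟨g, hg⟩ := h
    have hψ : ψ = φ * MulAut.conj g := by rw [hg, mul_inv_cancel_left]
    show D.autC φ μ = D.autC ψ μ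
    rw [hψ, D.autC_mul, D.autC_inn])

/-- Projective equivalence (positive rescaling) on `cv̄(F_N)`. -/
def rayT (D : KLData N) : Setoid D.cvbar where
  r T T' := ∃ c : ℝ≥0, 0 < c ∧ T' = D.smul c T
  iseqv := by
    refine ⟨fun T => ⟨1, one_pos, (D.smul_one T).symm⟩, ?_, ?_⟩
    · rintro T T' ⟨c, hc, rfl⟩
      exact ⟨c⁻¹, inv_pos.2 hc,
        by rw [← D.smul_mul, inv_mul_cancel₀ hc.ne', D.smul_one]⟩
    · rintro T T' T'' ⟨c, hc, rfl⟩ ⟨d, hd, rfl⟩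
      exact ⟨d * c, mul_pos hd hc, (D.smul_mul d c T).symm⟩

/-- The projectivized compactified Outer space `CV̄(F_N)`. -/
def PT (D : KLData N) := Quotient D.rayT

instance (D : KLData N) : TopologicalSpace D.PT :=
  TopologicalSpace.coinduced (Quotient.mk'' : D.cvbar → D.PT) D.top_cvbar

/-- Nonzero currents. -/
def CurrNZ (D : KLData N) := {μ : D.Curr // μ ≠ 0}

instance (D : KLData N) : TopologicalSpace D.CurrNZ :=
  instTopologicalSpaceSubtype

/-- Projective equivalence (positive rescaling) on nonzero currents. -/
def rayC (D : KLData N) : Setoid D.CurrNZ where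
  r μ ν := ∃ c : ℝ≥0, 0 < c ∧ ν.1 = c • μ.1
  iseqv := by
    refine ⟨fun μ => ⟨1, one_pos, (one_smul _ _).symm⟩, ?_, ?_⟩
    · rintro μ ν ⟨c, hc, h⟩
      exact ⟨c⁻¹, inv_pos.2 hc,
        by rw [h, smul_smul, inv_mul_cancel₀ hc.ne', one_smul]⟩
    · rintro μ ν ξ ⟨c, hc, h⟩ ⟨d, hd, h'⟩
      exact ⟨d * c, mul_pos hd hc, by rw [h', h, smul_smul]⟩

/-- The space `ℙCurr(F_N)` of projectivized geodesic currents. -/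
def PC (D : KLData N) := Quotient D.rayC

instance (D : KLData N) : TopologicalSpace D.PC :=
  TopologicalSpace.coinduced (Quotient.mk'' : D.CurrNZ → D.PC) inferInstance

/-- The action of `Aut(F_N)` on `CV̄(F_N)`. -/
def autPT (D : KLData N) (φ : MulAut (FN N)) : D.PT → D.PT :=
  Quotient.map' (D.autT φ) (by
    rintro T T' ⟨c, hc, rfl⟩
    exact ⟨c, hc, D.autT_smul φ c T⟩)

/-- The action of `Out(F_N)` on `CV̄(F_N)`. -/
def outPT (D : KLData N) (Φ : Out N) : D.PT → D.PT :=
  Quotient.liftOn' Φ (fun φ => D.autPT φ) (by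
    intro φ ψ h
    rw [QuotientGroup.leftRel_apply] at h
    obtain ⟨g, hg⟩ := h
    have hψ : ψ = φ * MulAut.conj g := by rw [hg, mul_inv_cancel_left]
    funext x
    refine Quotient.inductionOn' x (fun T => ?_)
    show Quotient.mk'' (D.autT φ T) = Quotient.mk'' (D.autT ψ T)
    rw [hψ, D.autT_mul, D.autT_inn])

lemma autC_ne_zero (D : KLData N) (φ : MulAut (FN N)) {μ : D.Curr} (h : μ ≠ 0) :
    D.autC φ μ ≠ 0 := by
  intro h0
  apply h
  have h1 := congrArg (D.autC φ⁻¹) h0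
  rw [← D.autC_mul, inv_mul_cancel, D.autC_one, D.autC_zero] at h1
  exact h1

/-- The action of `Aut(F_N)` on nonzero currents. -/
def autCNZ (D : KLData N) (φ : MulAut (FN N)) (μ : D.CurrNZ) : D.CurrNZ :=
  ⟨D.autC φ μ.1, D.autC_ne_zero φ μ.2⟩

/-- The action of `Aut(F_N)` on `ℙCurr(F_N)`. -/
def autPC (D : KLData N) (φ : MulAut (FN N)) : D.PC → D.PC :=
  Quotient.map' (D.autCNZ φ) (by
    rintro μ ν ⟨c, hc, h⟩
    exact ⟨c, hc, by
      show D.autC φ ν.1 = c • D.autC φ μ.1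
      rw [h, D.autC_smul]⟩)

/-- The action of `Out(F_N)` on `ℙCurr(F_N)`. -/
def outPC (D : KLData N) (Φ : Out N) : D.PC → D.PC :=
  Quotient.liftOn' Φ (fun φ => D.autPC φ) (by
    intro φ ψ h
    rw [QuotientGroup.leftRel_apply] at h
    obtain ⟨g, hg⟩ := h
    have hψ : ψ = φ * MulAut.conj g := by rw [hg, mul_inv_cancel_left]
    funext x
    refine Quotient.inductionOn' x (fun μ => ?_)
    show Quotient.mk'' (D.autCNZ φ μ) = Quotient.mk'' (D.autCNZ ψ μ)
    have : D.autCNZ ψ μ = D.autCNZ φ μ := by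
      apply Subtype.ext
      show D.autC ψ μ.1 = D.autC φ μ.1
      rw [hψ, D.autC_mul, D.autC_inn]
    rw [this])

end KLData

/-- `KLData` together with the geometric intersection form of [Kapovich–Lustig],
i.e. the content of Theorem A of the paper. -/
structure KLDataI (N : ℕ) extends KLData N where
  /-- the geometric intersection form `⟨·,·⟩ : cv̄(F_N) × Curr(F_N) → ℝ_{≥0}` -/
  ip : cvbar → Curr → ℝ
  ip_nonneg : ∀ T μ, 0 ≤ ip T μ
  ip_cont : Continuous fun p : cvbar × Curr => ip p.1 p.2
  /-- `ℝ_{≥0}`-homogeneity in the first argument -/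
  ip_smul : ∀ (c : ℝ≥0) T μ, ip (smul c T) μ = (c : ℝ) * ip T μ
  /-- `ℝ_{≥0}`-linearity in the second argument -/
  ip_linear : ∀ T (c₁ c₂ : ℝ≥0) (μ₁ μ₂ : Curr),
    ip T (c₁ • μ₁ + c₂ • μ₂) = (c₁ : ℝ) * ip T μ₁ + (c₂ : ℝ) * ip T μ₂
  /-- `Out(F_N)`-invariance -/
  ip_aut : ∀ φ T μ, ip (autT φ T) (autC φ μ) = ip T μ
  /-- `⟨T, η_g⟩ = ‖g‖_T` -/
  ip_eta : ∀ T g, g ≠ 1 → ip T (eta g) = len T g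

namespace KLDataI

variable {N : ℕ}

/-- Vanishing of the intersection number on projective classes:
`⟨[T],[μ]⟩ = 0`, i.e. `⟨T,μ⟩ = 0` for all (equivalently, some) representatives. -/
def ipZero (D : KLDataI N) (x : D.PT) (y : D.PC) : Prop :=
  ∀ (T : D.cvbar) (μ : D.CurrNZ),
    Quotient.mk'' T = x → Quotient.mk'' μ = y → D.ip T μ.1 = 0

/-- Nonvanishing of the intersection number on projective classes:
`⟨[T],[μ]⟩ ≠ 0`, i.e. `⟨T,μ⟩ ≠ 0` for all (equivalently, some) representatives. -/
def ipNe (D : KLDataI N) (x : D.PT) (y : D.PC) : Prop :=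
  ∀ (T : D.cvbar) (μ : D.CurrNZ),
    Quotient.mk'' T = x → Quotient.mk'' μ = y → D.ip T μ.1 ≠ 0

/-- Vertices of the intersection graph `I(F_N)`: `CV̄(F_N) ⊔ ℙCurr(F_N)`. -/
def IVertex (D : KLDataI N) := D.PT ⊕ D.PC

/-- The intersection graph `I(F_N)`: the bipartite graph on
`CV̄(F_N) ⊔ ℙCurr(F_N)` where `[T]` and `[μ]` are adjacent iff `⟨T,μ⟩ = 0`. -/
def igraph (D : KLDataI N) : SimpleGraph D.IVertex where
  Adj x y := (∃ t m, x = Sum.inl t ∧ y = Sum.inr m ∧ D.ipZero t m) ∨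
             (∃ t m, x = Sum.inr m ∧ y = Sum.inl t ∧ D.ipZero t m)
  symm := by
    constructor
    rintro x y (⟨t, m, hx, hy, h⟩ | ⟨t, m, hx, hy, h⟩)
    · exact Or.inr ⟨t, m, hy, hx, h⟩
    · exact Or.inl ⟨t, m, hy, hx, h⟩
  loopless := by
    constructor
    rintro x (⟨t, m, rfl, hy, -⟩ | ⟨t, m, rfl, hy, -⟩) <;> simp_all

/-- The action of `Out(F_N)` on the vertices of the intersection graph. -/
def outIV (D : KLDataI N) (Φ : Out N) : D.IVertex → D.IVertex :=
  Sum.map (D.outPT Φ) (D.outPC Φ)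

/-- The map `q` from vertices of the (dual) free splitting graph to `CV̄(F_N)`,
sending a one-edge free splitting to the projective class of its Bass–Serre tree. -/
def qmap (D : KLDataI N) : SplitVertex N → D.PT := fun x =>
  Quotient.liftOn' x (fun s => (Quotient.mk'' (D.bs s) : D.PT))
    (fun s t h => congrArg _ (D.bs_eq s t h))

end KLDataI

/-- North–South dynamics data for an iwip `φ` without periodic conjugacy classes
(Levitt–Lustig for `CV̄(F_N)`, R. Martin for `ℙCurr(F_N)`): the attracting and
repelling fixed points `[T_+], [T_-] ∈ ∂CV(F_N)` and `[μ_+], [μ_-] ∈ ℙCurr(F_N)`. -/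
structure NSData {N : ℕ} (D : KLDataI N) (φ : Out N) where
  tP : D.PT
  tM : D.PT
  muP : D.PC
  muM : D.PC
  /-- `[T_+]` lies in the Thurston boundary `∂CV(F_N) = CV̄(F_N) \ CV(F_N)` -/
  tP_boundary : ∀ T ∈ D.cv, (Quotient.mk'' T : D.PT) ≠ tP
  /-- `[T_-]` lies in the Thurston boundary -/
  tM_boundary : ∀ T ∈ D.cv, (Quotient.mk'' T : D.PT) ≠ tM
  t_ne : tP ≠ tM
  fixP : D.outPT φ tP = tP
  fixM : D.outPT φ tM = tM
  /-- `[T_+]` and `[T_-]` are the only fixed points in `CV̄(F_N)` -/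
  fix_only : ∀ x, D.outPT φ x = x → x = tP ∨ x = tM
  /-- North–South dynamics on `CV̄(F_N)`: attraction to `[T_+]` -/
  attrT : ∀ x, x ≠ tM → Filter.Tendsto (fun n : ℕ => D.outPT (φ ^ n) x) Filter.atTop (nhds tP)
  /-- North–South dynamics on `CV̄(F_N)`: attraction to `[T_-]` under `φ⁻¹` -/
  repT : ∀ x, x ≠ tP → Filter.Tendsto (fun n : ℕ => D.outPT (φ⁻¹ ^ n) x) Filter.atTop (nhds tM)
  mu_ne : muP ≠ muM
  fixCP : D.outPC φ muP = muP
  fixCM : D.outPC φ muM = muM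
  /-- `[μ_+]` and `[μ_-]` are the only fixed points in `ℙCurr(F_N)` -/
  fixC_only : ∀ y, D.outPC φ y = y → y = muP ∨ y = muM
  /-- North–South dynamics on `ℙCurr(F_N)`: attraction to `[μ_+]` -/
  attrC : ∀ y, y ≠ muM → Filter.Tendsto (fun n : ℕ => D.outPC (φ ^ n) y) Filter.atTop (nhds muP)
  /-- North–South dynamics on `ℙCurr(F_N)`: attraction to `[μ_-]` under `φ⁻¹` -/
  repC : ∀ y, y ≠ muP → Filter.Tendsto (fun n : ℕ => D.outPC (φ⁻¹ ^ n) y) Filter.atTop (nhds muM)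

namespace KLDataI

variable {N : ℕ} (D : KLDataI N)

theorem continuous_ip (T : D.cvbar) : Continuous (D.ip T) :=
  D.ip_cont.comp (Continuous.prodMk_right T)

theorem ip_smul_right (T : D.cvbar) (c : ℝ≥0) (μ : D.Curr) :
    D.ip T (c • μ) = c * D.ip T μ := by
  simpa using D.ip_linear T c 0 μ 0

theorem ip_smul_eta (T : D.cvbar) (c : ℝ≥0) {g : FN N} (hg : g ≠ 1) :
    D.ip T (c • D.eta g) = c * D.len T g := by
  rw [ip_smul_right, ip_eta _ _ _ hg]

/-- A uniform comparison of translation lengths passes to all currents: it is linear in the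
counting currents, which span a dense cone, and both sides are continuous. -/
theorem abs_ip_sub_le_of_abs_len_sub_le {T₀ T₁ T₂ : D.cvbar} {ε : ℝ}
    (h : ∀ g, |D.len T₁ g - D.len T₂ g| ≤ ε * D.len T₀ g) (ν : D.Curr) :
    |D.ip T₁ ν - D.ip T₂ ν| ≤ ε * D.ip T₀ ν := by
  refine D.rational_dense.induction (P := fun μ => |D.ip T₁ μ - D.ip T₂ μ| ≤ ε * D.ip T₀ μ)
    ?_ ?_ ν
  · rintro _ ⟨c, g, hg, rfl⟩
    simp only [ip_smul_eta _ _ _ hg, ← mul_sub, abs_mul, NNReal.abs_eq, mul_left_comm ε]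
    exact mul_le_mul_of_nonneg_left (h g) c.coe_nonneg
  · exact isClosed_le ((D.continuous_ip T₁).sub (D.continuous_ip T₂)).abs
      (continuous_const.mul (D.continuous_ip T₀))

end KLDataI

theorem ip_difference_bound_general (N : ℕ) (D : KLDataI N)
    (b : Fin N → FN N) (hb : IsBasis b) (ε : ℝ)
    (U : Set D.cvbar)
    (hUε : ∀ (w : FN N) (T₁ T₂ : D.cvbar), T₁ ∈ U → T₂ ∈ U →
      |D.len T₁ w - D.len T₂ w| ≤ ε * D.len (D.cayley b hb) w) :
    ∀ (T₁ T₂ : D.cvbar), T₁ ∈ U → T₂ ∈ U → ∀ ν : D.Curr,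
      |D.ip T₁ ν - D.ip T₂ ν| ≤ 2 * ε * D.ip (D.cayley b hb) ν := by
  intro T₁ T₂ h₁ h₂ ν
  have hν := D.abs_ip_sub_le_of_abs_len_sub_le (fun g => hUε g T₁ T₂ h₁ h₂) ν
  linarith [abs_nonneg (D.ip T₁ ν - D.ip T₂ ν)]

theorem ip_difference_bound (N : ℕ) (hN : 2 ≤ N) (D : KLDataI N)
    (b : Fin N → FN N) (hb : IsBasis b) (T : D.cvbar) (ε : ℝ) (hε : 0 < ε)
    (U : Set D.cvbar) (hU : U ∈ nhds T)
    (hUε : ∀ (w : FN N) (T₁ T₂ : D.cvbar), T₁ ∈ U → T₂ ∈ U →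
      |D.len T₁ w - D.len T₂ w| ≤ ε * D.len (D.cayley b hb) w) :
    ∀ (T₁ T₂ : D.cvbar), T₁ ∈ U → T₂ ∈ U → ∀ ν : D.Curr,
      |D.ip T₁ ν - D.ip T₂ ν| ≤ 2 * ε * D.ip (D.cayley b hb) ν :=
  ip_difference_bound_general N D b hb ε U hUε

end KL
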